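/- arXiv:2003.08711 — 2 statements merged into one kernel-verified Lean document; each statement's English description precedes it below -/
import Mathlib

section
/- Let g(s) = p(s)/q(s) be a rational function with p, q coprime polynomials, and let deg g = max(deg p, deg q) be its McMillan degree. Given points μ_1,...,μ_k and λ_1,...,λ_q, all k+q of them mutually distinct and none of them a pole of g, form the Loewner matrix L with entries L_{ij} = (g(μ_i) - g(λ_j))/(μ_i - λ_j). If k ≥ deg g and q ≥ deg g, then rank L = deg g. -/
open Polynomial

/-- Sylvester-type injectivity: if `a * p = b * q` with `p, q` coprime and
`a, b` of degree below `d = max (deg p) (deg q)`, then `a = 0`. -/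
private lemma sylvester_aux (p q : Polynomial ℂ) (hq : q ≠ 0) (hcop : IsCoprime p q)
    (d : ℕ) (hd : d = max p.natDegree q.natDegree)
    (a b : Polynomial ℂ) (ha : a.degree < (d : WithBot ℕ)) (hb : b.degree < (d : WithBot ℕ))
    (hab : a * p = b * q) : a = 0 := by
  rcases le_or_gt p.natDegree q.natDegree with hle | hlt
  · have hdq : q.degree = (d : WithBot ℕ) := by
      rw [degree_eq_natDegree hq, hd, max_eq_right hle]
    have hdvd : q ∣ a := (hcop.symm).dvd_of_dvd_mul_right ⟨b, by rw [hab, mul_comm]⟩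
    by_contra ha0
    exact absurd ((degree_le_of_dvd hdvd ha0).trans_lt (hdq ▸ ha)) (lt_irrefl _)
  · have hdp : d = p.natDegree := by rw [hd, max_eq_left hlt.le]
    have hp0 : p ≠ 0 := by
      intro h
      rw [h, natDegree_zero] at hdp
      rw [h, natDegree_zero] at hlt
      omega
    have hpd : p.degree = (d : WithBot ℕ) := by rw [degree_eq_natDegree hp0, hdp]
    have hdvd : p ∣ b := hcop.dvd_of_dvd_mul_right ⟨a, by rw [← hab, mul_comm]⟩
    have hb0 : b = 0 := by
      by_contra hb0
      exact absurd ((degree_le_of_dvd hdvd hb0).trans_lt (hpd ▸ hb)) (lt_irrefl _)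
    have hz : a * p = 0 := by rw [hab, hb0, zero_mul]
    rcases mul_eq_zero.1 hz with h | h
    · exact h
    · exact absurd h hp0

/-- Main Loewner matrix property: if both numbers of left and right sample
points are at least the McMillan degree of the rational function `g = p/q`
(with `p, q` coprime), and all sample points are mutually distinct and are not
poles of `g`, then the rank of the Loewner matrix equals the McMillan degree. -/
theorem loewner_rank_eq_mcmillan_degree
    (p q : Polynomial ℂ) (hq : q ≠ 0) (hcop : IsCoprime p q)
    (k m : ℕ) (μ : Fin k → ℂ) (lam : Fin m → ℂ)
    (hμ : Function.Injective μ) (hlam : Function.Injective lam)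
    (hdisj : ∀ i j, μ i ≠ lam j)
    (hμpole : ∀ i, q.eval (μ i) ≠ 0) (hlampole : ∀ j, q.eval (lam j) ≠ 0)
    (g : ℂ → ℂ) (hg : ∀ s, g s = p.eval s / q.eval s)
    (d : ℕ) (hd : d = max p.natDegree q.natDegree)
    (hk : k ≥ d) (hm : m ≥ d)
    (L : Matrix (Fin k) (Fin m) ℂ)
    (hL : ∀ i j, L i j = (g (μ i) - g (lam j)) / (μ i - lam j)) :
    L.rank = d := by
  classical
  have hdp : p.degree ≤ (d : WithBot ℕ) :=
    degree_le_natDegree.trans (Nat.cast_le.2 (hd ▸ le_max_left p.natDegree q.natDegree))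
  have hdq : q.degree ≤ (d : WithBot ℕ) :=
    degree_le_natDegree.trans (Nat.cast_le.2 (hd ▸ le_max_right p.natDegree q.natDegree))
  -- the "local Bezoutian" polynomial family
  set Bz : ℂ → Polynomial ℂ :=
    fun t => (C (q.eval t) * p - C (p.eval t) * q) /ₘ (X - C t) with hBzdef
  have hfac : ∀ t, (X - C t) * Bz t = C (q.eval t) * p - C (p.eval t) * q := by
    intro t
    apply mul_divByMonic_eq_iff_isRoot.2
    simp only [IsRoot.def, eval_sub, eval_mul, eval_C]
    ring
  have hrdeg : ∀ t : ℂ, (C (q.eval t) * p - C (p.eval t) * q).degree ≤ (d : WithBot ℕ) := by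
    intro t
    refine (degree_sub_le _ _).trans (max_le ((degree_mul_le _ _).trans ?_)
      ((degree_mul_le _ _).trans ?_))
    · calc degree (C (q.eval t)) + degree p ≤ 0 + degree p := add_le_add_left degree_C_le _
        _ = degree p := zero_add _
        _ ≤ (d : WithBot ℕ) := hdp
    · calc degree (C (p.eval t)) + degree q ≤ 0 + degree q := add_le_add_left degree_C_le _
        _ = degree q := zero_add _
        _ ≤ (d : WithBot ℕ) := hdq
  have hBdeg : ∀ t, (Bz t).degree < (d : WithBot ℕ) := by
    intro t
    rcases eq_or_ne (Bz t) 0 with h | h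
    · rw [h, degree_zero]
      exact_mod_cast WithBot.bot_lt_coe d
    · have h1 : degree (X - C t) + degree (Bz t) ≤ (d : WithBot ℕ) := by
        rw [← degree_mul, hfac t]; exact hrdeg t
      rw [degree_X_sub_C, degree_eq_natDegree h] at h1
      rw [degree_eq_natDegree h]
      have h2 : 1 + (Bz t).natDegree ≤ d := by exact_mod_cast h1
      exact Nat.cast_lt.2 (by omega)
  have hBnat : ∀ t, Bz t ≠ 0 → (Bz t).natDegree < d := fun t h =>
    (natDegree_lt_iff_degree_lt h).2 (hBdeg t)
  have hev : ∀ (t x : ℂ), (Bz t).eval x = ∑ a ∈ Finset.range d, (Bz t).coeff a * x ^ a := by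
    intro t x
    rcases eq_or_ne (Bz t) 0 with h | h
    · simp [h]
    · exact eval_eq_sum_range' (hBnat t h) x
  -- pointwise formula for L
  have hLB : ∀ i j, L i j = (Bz (lam j)).eval (μ i) / (q.eval (μ i) * q.eval (lam j)) := by
    intro i j
    have hst : μ i - lam j ≠ 0 := sub_ne_zero.2 (hdisj i j)
    have hqi := hμpole i
    have hqj := hlampole j
    have heval : (μ i - lam j) * (Bz (lam j)).eval (μ i)
        = q.eval (lam j) * p.eval (μ i) - p.eval (lam j) * q.eval (μ i) := by
      have h := congrArg (eval (μ i)) (hfac (lam j))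
      simpa [eval_mul, eval_sub, eval_C, eval_X] using h
    rw [hL, hg, hg]
    field_simp
    linear_combination (-1 : ℂ) * heval
  -- matrix factorization L = Xm * Nm
  set Xm : Matrix (Fin k) (Fin d) ℂ := fun i a => μ i ^ (a : ℕ) / q.eval (μ i) with hXm
  set Nm : Matrix (Fin d) (Fin m) ℂ :=
    fun a j => (Bz (lam j)).coeff (a : ℕ) / q.eval (lam j) with hNm
  have hLXN : L = Xm * Nm := by
    ext i j
    have hmm : (Xm * Nm) i j
        = ∑ a ∈ Finset.range d, μ i ^ a / q.eval (μ i) * ((Bz (lam j)).coeff a / q.eval (lam j)) := by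
      rw [Matrix.mul_apply]
      exact Fin.sum_univ_eq_sum_range
        (fun a => μ i ^ a / q.eval (μ i) * ((Bz (lam j)).coeff a / q.eval (lam j))) d
    rw [hmm, hLB i j, hev (lam j) (μ i), Finset.sum_div]
    refine Finset.sum_congr rfl fun a _ => ?_
    field_simp
  -- restricted right sample points
  set lam' : Fin d → ℂ := fun j => lam (Fin.castLE hm j) with hlam'
  have hlam'inj : Function.Injective lam' := fun a b h => Fin.castLE_injective hm (hlam h)
  have hlam'pole : ∀ j, q.eval (lam' j) ≠ 0 := fun j => hlampole _
  set N' : Matrix (Fin d) (Fin d) ℂ := fun a j => Nm a (Fin.castLE hm j) with hN'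
  -- N' has trivial kernel
  have hker : ∀ c : Fin d → ℂ, N'.mulVec c = 0 → c = 0 := by
    intro c hc
    set e : Fin d → ℂ := fun j => c j / q.eval (lam' j) with he
    set F : Polynomial ℂ := ∑ j : Fin d, C (e j) * Bz (lam' j) with hF
    have hFdeg : F.degree < (d : WithBot ℕ) := by
      refine (degree_sum_le _ _).trans_lt
        ((Finset.sup_lt_iff (by exact_mod_cast WithBot.bot_lt_coe d)).2 fun j _ => ?_)
      refine (degree_mul_le _ _).trans_lt ?_
      calc degree (C (e j)) + degree (Bz (lam' j)) ≤ 0 + degree (Bz (lam' j)) :=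
            add_le_add_left degree_C_le _
        _ = degree (Bz (lam' j)) := zero_add _
        _ < (d : WithBot ℕ) := hBdeg _
    have hFc : ∀ n : ℕ, F.coeff n = 0 := by
      intro n
      by_cases hn : n < d
      · have h2 := congrFun hc ⟨n, hn⟩
        simp only [Matrix.mulVec, dotProduct, Pi.zero_apply] at h2
        have h1 : F.coeff n = ∑ j : Fin d, e j * (Bz (lam' j)).coeff n := by
          rw [hF, finset_sum_coeff]
          exact Finset.sum_congr rfl fun j _ => coeff_C_mul _
        rw [h1, ← h2]
        refine Finset.sum_congr rfl fun j _ => ?_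
        simp only [hN', hNm, he, hlam']
        ring
      · exact coeff_eq_zero_of_degree_lt (hFdeg.trans_le (Nat.cast_le.2 (le_of_not_gt hn)))
    have hF0 : F = 0 := by
      ext n
      rw [hFc n, coeff_zero]
    set P : Fin d → Polynomial ℂ :=
      fun j => ∏ l ∈ Finset.univ.erase j, (X - C (lam' l)) with hP
    have hPmul : ∀ j, (X - C (lam' j)) * P j = ∏ l : Fin d, (X - C (lam' l)) := by
      intro j
      simp only [hP]
      exact Finset.mul_prod_erase Finset.univ (fun l => X - C (lam' l)) (Finset.mem_univ j)
    have hPdeg : ∀ j : Fin d, (P j).degree < (d : WithBot ℕ) := by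
      intro j
      have hnd : (P j).natDegree = d - 1 := by
        rw [hP]
        rw [natDegree_prod _ _ fun l _ => X_sub_C_ne_zero _]
        simp [natDegree_X_sub_C, Finset.card_erase_of_mem]
      have hj : 0 < d := j.pos
      calc (P j).degree ≤ ((P j).natDegree : WithBot ℕ) := degree_le_natDegree
        _ = ((d - 1 : ℕ) : WithBot ℕ) := by exact_mod_cast hnd
        _ < (d : WithBot ℕ) := Nat.cast_lt.2 (by omega)
    set A : Polynomial ℂ := ∑ j : Fin d, C (e j * q.eval (lam' j)) * P j with hA
    set Bb : Polynomial ℂ := ∑ j : Fin d, C (e j * p.eval (lam' j)) * P j with hBb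
    have hAdeg : A.degree < (d : WithBot ℕ) := by
      refine (degree_sum_le _ _).trans_lt
        ((Finset.sup_lt_iff (by exact_mod_cast WithBot.bot_lt_coe d)).2 fun j _ => ?_)
      refine (degree_mul_le _ _).trans_lt ?_
      calc degree (C (e j * q.eval (lam' j))) + degree (P j) ≤ 0 + degree (P j) :=
            add_le_add_left degree_C_le _
        _ = degree (P j) := zero_add _
        _ < (d : WithBot ℕ) := hPdeg j
    have hBbdeg : Bb.degree < (d : WithBot ℕ) := by
      refine (degree_sum_le _ _).trans_lt
        ((Finset.sup_lt_iff (by exact_mod_cast WithBot.bot_lt_coe d)).2 fun j _ => ?_)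
      refine (degree_mul_le _ _).trans_lt ?_
      calc degree (C (e j * p.eval (lam' j))) + degree (P j) ≤ 0 + degree (P j) :=
            add_le_add_left degree_C_le _
        _ = degree (P j) := zero_add _
        _ < (d : WithBot ℕ) := hPdeg j
    have hkey : A * p - Bb * q = (∏ l : Fin d, (X - C (lam' l))) * F := by
      rw [hA, hBb, hF, Finset.sum_mul, Finset.sum_mul, Finset.mul_sum, ← Finset.sum_sub_distrib]
      refine Finset.sum_congr rfl fun j _ => ?_
      calc C (e j * q.eval (lam' j)) * P j * p - C (e j * p.eval (lam' j)) * P j * q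
          = C (e j) * (P j * (C (q.eval (lam' j)) * p - C (p.eval (lam' j)) * q)) := by
            rw [C_mul, C_mul]; ring
        _ = C (e j) * (P j * ((X - C (lam' j)) * Bz (lam' j))) := by rw [hfac]
        _ = ((X - C (lam' j)) * P j) * (C (e j) * Bz (lam' j)) := by ring
        _ = (∏ l : Fin d, (X - C (lam' l))) * (C (e j) * Bz (lam' j)) := by rw [hPmul j]
    have hAB : A * p = Bb * q := by
      have h := hkey
      rw [hF0, mul_zero] at h
      exact sub_eq_zero.1 h
    have hA0 : A = 0 := sylvester_aux p q hq hcop d hd A Bb hAdeg hBbdeg hAB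
    funext j0
    have hevalA : ∑ j : Fin d, (C (e j * q.eval (lam' j)) * P j).eval (lam' j0) = 0 := by
      have h := congrArg (eval (lam' j0)) hA0
      rwa [hA, eval_finset_sum, eval_zero] at h
    have hsum : ∀ j ∈ Finset.univ, j ≠ j0 →
        (C (e j * q.eval (lam' j)) * P j).eval (lam' j0) = 0 := by
      intro j _ hj
      have hPz : (P j).eval (lam' j0) = 0 := by
        rw [hP, eval_prod]
        refine Finset.prod_eq_zero (Finset.mem_erase.2 ⟨fun hh => hj hh.symm, Finset.mem_univ _⟩) ?_
        simp
      rw [eval_mul, hPz, mul_zero]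
    rw [Finset.sum_eq_single j0 hsum (fun h => absurd (Finset.mem_univ j0) h)] at hevalA
    rw [eval_mul, eval_C] at hevalA
    have hPj0 : (P j0).eval (lam' j0) ≠ 0 := by
      rw [hP, eval_prod]
      refine Finset.prod_ne_zero_iff.2 fun l hl => ?_
      simp only [eval_sub, eval_X, eval_C]
      exact sub_ne_zero.2 fun hh => (Finset.mem_erase.1 hl).1 (hlam'inj hh.symm)
    have he0 : e j0 = 0 := by
      rcases mul_eq_zero.1 hevalA with h | h
      · rcases mul_eq_zero.1 h with h' | h'
        · exact h'
        · exact absurd h' (hlam'pole j0)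
      · exact absurd h hPj0
    have hcd : c j0 / q.eval (lam' j0) = 0 := he0
    rcases div_eq_zero_iff.1 hcd with h | h
    · exact h
    · exact absurd h (hlam'pole j0)
  have hN'unit : IsUnit N' := by
    rw [← Matrix.mulVec_injective_iff_isUnit]
    intro c c' hcc
    have h : N'.mulVec (c - c') = 0 := by
      rw [Matrix.mulVec_sub, hcc, sub_self]
    exact sub_eq_zero.1 (hker _ h)
  have hrankN' : N'.rank = d := by
    rw [Matrix.rank_of_isUnit N' hN'unit, Fintype.card_fin]
  have hNle : N'.rank ≤ Nm.rank := by
    have hNeq : N' = Nm * (Matrix.of fun j b => if Fin.castLE hm b = j then (1 : ℂ) else 0) := by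
      ext a b
      rw [Matrix.mul_apply]
      simp [Finset.sum_ite_eq]
      rfl
    rw [hNeq]
    exact Matrix.rank_mul_le_left _ _
  have hNrank : Nm.rank = d := by
    exact le_antisymm (Nm.rank_le_card_height.trans (by simp))
      (le_trans (le_of_eq hrankN'.symm) hNle)
  have hLle : L.rank ≤ d := by
    rw [hLXN]
    exact (Matrix.rank_mul_le_right _ _).trans hNrank.le
  -- lower bound via the first d rows
  set X' : Matrix (Fin d) (Fin d) ℂ := fun a b => Xm (Fin.castLE hk a) b with hX'
  have hX'det : IsUnit X'.det := by
    have hX'eq : X' = Matrix.diagonal (fun i => (q.eval (μ (Fin.castLE hk i)))⁻¹)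
        * Matrix.vandermonde (fun i => μ (Fin.castLE hk i)) := by
      ext i a
      rw [Matrix.diagonal_mul]
      simp only [hX', hXm, Matrix.vandermonde]
      rw [div_eq_inv_mul]
      rfl
    rw [hX'eq, Matrix.det_mul, Matrix.det_diagonal]
    refine isUnit_iff_ne_zero.2 (mul_ne_zero ?_ ?_)
    · exact Finset.prod_ne_zero_iff.2 fun i _ => inv_ne_zero (hμpole _)
    · exact Matrix.det_vandermonde_ne_zero_iff.2 fun a b h => Fin.castLE_injective hk (hμ h)
  set L' : Matrix (Fin d) (Fin m) ℂ := fun a j => L (Fin.castLE hk a) j with hL'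
  have hsub : L' = X' * Nm := by
    ext a j
    show L (Fin.castLE hk a) j = _
    rw [hLXN]
    simp [Matrix.mul_apply, hX']
    rfl
  have hL'rank : L'.rank = d := by
    rw [hsub, Matrix.rank_mul_eq_right_of_isUnit_det X' Nm hX'det, hNrank]
  have hLge : d ≤ L.rank := by
    have hEL : L' = (Matrix.of fun (a : Fin d) (i : Fin k) =>
        if i = Fin.castLE hk a then (1 : ℂ) else 0) * L := by
      ext a j
      rw [Matrix.mul_apply]
      simp [Finset.sum_ite_eq']
      rfl
    calc d = L'.rank := hL'rank.symm
      _ ≤ L.rank := by rw [hEL]; exact Matrix.rank_mul_le_right _ _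
  exact le_antisymm hLle hLge
end

section
/- Suppose L and L_s arise from samples of a rational function H and the pencil (L_s, L) is regular (i.e., det(L_s - sL) is not identically zero and L is invertible at the interpolation points); define H̃(s) = W (L_s - s L)^{-1} V. Then H̃ interpolates the data: H̃(μ_i) = v_i and H̃(λ_j) = w_j for all i, j, whenever L_s - μ_i L and L_s - λ_j L are invertible. -/
/-! Row `i` of `Lₛ - μᵢ L` is the row `W` of right values, and column `j` of `Lₛ - λⱼ L` is the
column `V` of left values. Hence with `M = Lₛ - μᵢ L` we get `W M⁻¹ V = (M M⁻¹ V)ᵢ = vᵢ`, and with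
`M = Lₛ - λⱼ L` we get `W M⁻¹ V = (W M⁻¹ M)ⱼ = wⱼ`. -/

namespace Matrix

variable {K : Type*} [Field K] {l m n : Type*} [Fintype n] [DecidableEq n]

theorem submatrix_mul_nonsing_inv_mul (M : Matrix n n K) (hM : IsUnit M.det) (r : m → n)
    (V : Matrix n l K) : M.submatrix r id * M⁻¹ * V = V.submatrix r id := by
  have h : M.submatrix r id * M⁻¹ = (1 : Matrix n n K).submatrix r id := by
    rw [← mul_nonsing_inv M hM, submatrix_mul _ _ r id id Function.bijective_id, submatrix_id_id]
  simpa [h] using (submatrix_mul 1 V r id id Function.bijective_id).symm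

theorem mul_nonsing_inv_mul_submatrix (M : Matrix n n K) (hM : IsUnit M.det) (c : l → n)
    (W : Matrix m n K) : W * M⁻¹ * M.submatrix id c = W.submatrix id c := by
  have h : M⁻¹ * M.submatrix id c = (1 : Matrix n n K).submatrix id c := by
    rw [← nonsing_inv_mul M hM, submatrix_mul _ _ id id c Function.bijective_id, submatrix_id_id]
  simpa [Matrix.mul_assoc, h] using (submatrix_mul W 1 id id c Function.bijective_id).symm

end Matrix

section Loewner

variable {K : Type*} [Field K] {ι κ : Type*} {μ : ι → K} {lam : κ → K} {v : ι → K} {w : κ → K}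
  {L Ls : Matrix ι κ K}

theorem loewner_sub_smul_left_apply (hne : ∀ i j, μ i ≠ lam j)
    (hL : ∀ i j, L i j = (v i - w j) / (μ i - lam j))
    (hLs : ∀ i j, Ls i j = (μ i * v i - lam j * w j) / (μ i - lam j)) (i : ι) (j : κ) :
    (Ls - μ i • L) i j = w j := by
  have hd : μ i - lam j ≠ 0 := sub_ne_zero.mpr (hne i j)
  rw [Matrix.sub_apply, Matrix.smul_apply, hL, hLs, smul_eq_mul]
  field_simp
  ring

theorem loewner_sub_smul_right_apply (hne : ∀ i j, μ i ≠ lam j)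
    (hL : ∀ i j, L i j = (v i - w j) / (μ i - lam j))
    (hLs : ∀ i j, Ls i j = (μ i * v i - lam j * w j) / (μ i - lam j)) (i : ι) (j : κ) :
    (Ls - lam j • L) i j = v i := by
  have hd : μ i - lam j ≠ 0 := sub_ne_zero.mpr (hne i j)
  rw [Matrix.sub_apply, Matrix.smul_apply, hL, hLs, smul_eq_mul]
  field_simp
  ring

end Loewner

theorem loewner_interpolant_interpolates_general
    (n : ℕ) (μ lam : Fin n → ℂ) (v w : Fin n → ℂ)
    (hne : ∀ i j, μ i ≠ lam j)
    (L Ls : Matrix (Fin n) (Fin n) ℂ)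
    (hL : ∀ i j, L i j = (v i - w j) / (μ i - lam j))
    (hLs : ∀ i j, Ls i j = (μ i * v i - lam j * w j) / (μ i - lam j))
    (V : Matrix (Fin n) (Fin 1) ℂ) (hV : ∀ i, V i 0 = v i)
    (W : Matrix (Fin 1) (Fin n) ℂ) (hW : ∀ j, W 0 j = w j)
    (hinvμ : ∀ i, IsUnit (Ls - μ i • L))
    (hinvlam : ∀ j, IsUnit (Ls - lam j • L))
    (Htilde : ℂ → ℂ)
    (hH : ∀ s, Htilde s = (W * (Ls - s • L)⁻¹ * V) 0 0) :
    (∀ i, Htilde (μ i) = v i) ∧ (∀ j, Htilde (lam j) = w j) := by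
  constructor
  · intro i
    have hrow : W = (Ls - μ i • L).submatrix (fun _ => i) id := by
      ext a j
      rw [Fin.fin_one_eq_zero a, hW, Matrix.submatrix_apply,
        loewner_sub_smul_left_apply hne hL hLs]
      rfl
    rw [hH, hrow, Matrix.submatrix_mul_nonsing_inv_mul _ ((hinvμ i).map Matrix.detMonoidHom)]
    exact hV i
  · intro j
    have hcol : V = (Ls - lam j • L).submatrix id (fun _ => j) := by
      ext k a
      rw [Fin.fin_one_eq_zero a, hV, Matrix.submatrix_apply,
        loewner_sub_smul_right_apply hne hL hLs]
      rfl
    rw [hH, hcol, Matrix.mul_nonsing_inv_mul_submatrix _ ((hinvlam j).map Matrix.detMonoidHom)]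
    exact hW j

/-- The Loewner interpolant `H̃(s) = W (Lₛ - s L)⁻¹ V` interpolates the data:
`H̃(μᵢ) = vᵢ` and `H̃(λⱼ) = wⱼ`, provided `Lₛ - μᵢ L` and `Lₛ - λⱼ L`
are invertible. -/
theorem loewner_interpolant_interpolates
    (n : ℕ) (μ lam : Fin n → ℂ) (v w : Fin n → ℂ)
    (hμ : Function.Injective μ) (hlam : Function.Injective lam)
    (hne : ∀ i j, μ i ≠ lam j)
    (L Ls : Matrix (Fin n) (Fin n) ℂ)
    (hL : ∀ i j, L i j = (v i - w j) / (μ i - lam j))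
    (hLs : ∀ i j, Ls i j = (μ i * v i - lam j * w j) / (μ i - lam j))
    (V : Matrix (Fin n) (Fin 1) ℂ) (hV : ∀ i, V i 0 = v i)
    (W : Matrix (Fin 1) (Fin n) ℂ) (hW : ∀ j, W 0 j = w j)
    (hinvμ : ∀ i, IsUnit (Ls - μ i • L))
    (hinvlam : ∀ j, IsUnit (Ls - lam j • L))
    (Htilde : ℂ → ℂ)
    (hH : ∀ s, Htilde s = (W * (Ls - s • L)⁻¹ * V) 0 0) :
    (∀ i, Htilde (μ i) = v i) ∧ (∀ j, Htilde (lam j) = w j) :=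
  loewner_interpolant_interpolates_general n μ lam v w hne L Ls hL hLs V hV W hW hinvμ hinvlam
    Htilde hH
end
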